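/- Let (X,d,W) be a W-hyperbolic space, C⊆X convex, T:C→C nonexpansive, (xₙ) the Ishikawa iteration starting at x∈C with coefficients (λₙ),(sₙ)⊆[0,1], and suppose d(xₙ,Txₙ) ≤ 2b for all n (where b>0). Then for all m,n∈ℕ: d(x_{n+m}, Tx_{n+m}) ≤ d(xₙ,Txₙ) + 4b·(α_{n+m-1} - α_{n-1}), where αₙ := ∑_{i=0}^{n} sᵢ(1-λᵢ) (and α_{-1} := 0). -/

import Mathlib

/-! One Ishikawa step multiplies the displacement `d(x, Tx)` by at most `1 + 2 s (1 - λ)`: the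
intermediate point `y` lies within `s · d(x, Tx)` of `x`, so nonexpansiveness bounds `d(x, Ty)` by
`(1 + s) d(x, Tx)` and `d(y, Ty)` by `d(x, Tx)`, and the outer convex combination averages these.
With `d(x, Tx) ≤ 2b` the increase per step is at most `4b s (1 - λ)`, and the bound telescopes. -/

open Set Finset

theorem le_add_sum_of_le_add_succ {f g : ℕ → ℝ} (h : ∀ k, f (k + 1) ≤ f k + g k) (n m : ℕ) :
    f (n + m) ≤ f n + ∑ k ∈ range m, g (n + k) := by
  induction m with
  | zero => simp
  | succ m ih =>
    rw [sum_range_succ, ← add_assoc]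
    linarith [h (n + m)]

def ishikawaStep {X : Type*} (W : X → X → ℝ → X) (T : X → X) (l s : ℝ) (x : X) : X :=
  W x (T (W x (T x) s)) l

theorem ishikawaStep_mem {X : Type*} {W : X → X → ℝ → X} {C : Set X}
    (hC : ∀ x ∈ C, ∀ y ∈ C, ∀ l ∈ Icc (0:ℝ) 1, W x y l ∈ C)
    {T : X → X} (hTC : ∀ z ∈ C, T z ∈ C)
    {l s : ℝ} (hl : l ∈ Icc (0:ℝ) 1) (hs : s ∈ Icc (0:ℝ) 1) {x : X} (hx : x ∈ C) :
    ishikawaStep W T l s x ∈ C :=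
  hC x hx _ (hTC _ (hC x hx _ (hTC x hx) s hs)) l hl

section ConvexCombination

variable {X : Type*} [MetricSpace X] {W : X → X → ℝ → X}
  (hW : ∀ x y z : X, ∀ l ∈ Icc (0:ℝ) 1, dist z (W x y l) ≤ (1 - l) * dist z x + l * dist z y)
include hW

theorem dist_convexCombination_left_le (x y : X) {l : ℝ} (hl : l ∈ Icc (0:ℝ) 1) :
    dist x (W x y l) ≤ l * dist x y := by
  simpa using hW x y x l hl

theorem dist_convexCombination_right_le (x y : X) {l : ℝ} (hl : l ∈ Icc (0:ℝ) 1) :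
    dist (W x y l) y ≤ (1 - l) * dist x y := by
  simpa [dist_comm] using hW x y y l hl

theorem dist_ishikawaStep_le {C : Set X}
    (hC : ∀ x ∈ C, ∀ y ∈ C, ∀ l ∈ Icc (0:ℝ) 1, W x y l ∈ C)
    {T : X → X} (hTC : ∀ z ∈ C, T z ∈ C) (hT : ∀ z ∈ C, ∀ w ∈ C, dist (T z) (T w) ≤ dist z w)
    {l s : ℝ} (hl : l ∈ Icc (0:ℝ) 1) (hs : s ∈ Icc (0:ℝ) 1) {x : X} (hx : x ∈ C) :
    dist (ishikawaStep W T l s x) (T (ishikawaStep W T l s x)) ≤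
      (1 + 2 * s * (1 - l)) * dist x (T x) := by
  set y := W x (T x) s
  set x' := ishikawaStep W T l s x
  have hy : y ∈ C := hC x hx _ (hTC x hx) s hs
  have hx' : x' ∈ C := ishikawaStep_mem hC hTC hl hs hx
  have h_xy : dist x y ≤ s * dist x (T x) := dist_convexCombination_left_le hW x (T x) hs
  have h_yTx : dist y (T x) ≤ (1 - s) * dist x (T x) :=
    dist_convexCombination_right_le hW x (T x) hs
  have h_TxTy : dist (T x) (T y) ≤ dist x y := hT x hx y hy
  have h_xTy : dist x (T y) ≤ (1 + s) * dist x (T x) := by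
    linarith [dist_triangle x (T x) (T y)]
  have h_yTy : dist y (T y) ≤ dist x (T x) := by
    linarith [dist_triangle y (T x) (T y)]
  have h_x'Ty : dist x' (T y) ≤ (1 - l) * dist x (T y) :=
    dist_convexCombination_right_le hW x (T y) hl
  have h_yx' : dist y x' ≤ (1 - l) * dist y x + l * dist y (T y) := hW x (T y) y l hl
  have h_TyTx' : dist (T y) (T x') ≤ dist y x' := hT y hy x' hx'
  obtain ⟨hl0, hl1⟩ := hl
  rw [dist_comm y x] at h_yx'
  calc dist x' (T x') ≤ dist x' (T y) + dist (T y) (T x') := dist_triangle _ _ _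
    _ ≤ (1 - l) * dist x (T y) + ((1 - l) * dist x y + l * dist y (T y)) := by linarith
    _ ≤ (1 - l) * ((1 + s) * dist x (T x)) + ((1 - l) * (s * dist x (T x)) + l * dist x (T x)) := by
        gcongr
    _ = (1 + 2 * s * (1 - l)) * dist x (T x) := by ring

end ConvexCombination

theorem stmt_13_general {X : Type*} [MetricSpace X] (W : X → X → ℝ → X)
    (W1 : ∀ (x y z : X), ∀ l ∈ Set.Icc (0:ℝ) 1,
      dist z (W x y l) ≤ (1 - l) * dist z x + l * dist z y)
    (C : Set X)
    (hC : ∀ x ∈ C, ∀ y ∈ C, ∀ l ∈ Set.Icc (0:ℝ) 1, W x y l ∈ C)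
    (T : X → X) (hTC : ∀ z ∈ C, T z ∈ C)
    (hTnon : ∀ z ∈ C, ∀ w ∈ C, dist (T z) (T w) ≤ dist z w)
    (lam s : ℕ → ℝ) (hlam : ∀ n, lam n ∈ Set.Icc (0:ℝ) 1) (hs : ∀ n, s n ∈ Set.Icc (0:ℝ) 1)
    (x0 : X) (hx0C : x0 ∈ C) (x : ℕ → X) (hx0 : x 0 = x0)
    (hrec : ∀ n, x (n+1) = W (x n) (T (W (x n) (T (x n)) (s n))) (lam n))
    (b : ℝ)
    (hbnd : ∀ n : ℕ, dist (x n) (T (x n)) ≤ 2 * b) :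
    ∀ m n : ℕ, dist (x (n+m)) (T (x (n+m))) ≤ dist (x n) (T (x n)) +
      4 * b * ((∑ i ∈ Finset.range (n+m), s i * (1 - lam i)) - ∑ i ∈ Finset.range n, s i * (1 - lam i)) := by
  have hxC : ∀ k, x k ∈ C := by
    intro k
    induction k with
    | zero => exact hx0 ▸ hx0C
    | succ k ih => exact hrec k ▸ ishikawaStep_mem hC hTC (hlam k) (hs k) ih
  have hstep : ∀ k, dist (x (k + 1)) (T (x (k + 1))) ≤
      dist (x k) (T (x k)) + 4 * b * (s k * (1 - lam k)) := by
    intro k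
    have h := dist_ishikawaStep_le W1 hC hTC hTnon (hlam k) (hs k) (hxC k)
    rw [ishikawaStep, ← hrec k] at h
    have hsl : 0 ≤ s k * (1 - lam k) := mul_nonneg (hs k).1 (by linarith [(hlam k).2])
    nlinarith [hbnd k]
  intro m n
  rw [sum_range_add_sub_sum_range, mul_sum]
  exact le_add_sum_of_le_add_succ (f := fun k ↦ dist (x k) (T (x k))) hstep n m

theorem stmt_13 {X : Type*} [MetricSpace X] (W : X → X → ℝ → X)
    (W1 : ∀ (x y z : X), ∀ l ∈ Set.Icc (0:ℝ) 1,
      dist z (W x y l) ≤ (1 - l) * dist z x + l * dist z y)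
    (W2 : ∀ (x y : X), ∀ l ∈ Set.Icc (0:ℝ) 1, ∀ l' ∈ Set.Icc (0:ℝ) 1,
      dist (W x y l) (W x y l') = |l - l'| * dist x y)
    (W3 : ∀ (x y : X), ∀ l ∈ Set.Icc (0:ℝ) 1, W x y l = W y x (1 - l))
    (W4 : ∀ (x y z w : X), ∀ l ∈ Set.Icc (0:ℝ) 1,
      dist (W x z l) (W y w l) ≤ (1 - l) * dist x y + l * dist z w)
    (C : Set X)
    (hC : ∀ x ∈ C, ∀ y ∈ C, ∀ l ∈ Set.Icc (0:ℝ) 1, W x y l ∈ C)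
    (T : X → X) (hTC : ∀ z ∈ C, T z ∈ C)
    (hTnon : ∀ z ∈ C, ∀ w ∈ C, dist (T z) (T w) ≤ dist z w)
    (lam s : ℕ → ℝ) (hlam : ∀ n, lam n ∈ Set.Icc (0:ℝ) 1) (hs : ∀ n, s n ∈ Set.Icc (0:ℝ) 1)
    (x0 : X) (hx0C : x0 ∈ C) (x : ℕ → X) (hx0 : x 0 = x0)
    (hrec : ∀ n, x (n+1) = W (x n) (T (W (x n) (T (x n)) (s n))) (lam n))
    (b : ℝ) (hb : 0 < b)
    (hbnd : ∀ n : ℕ, dist (x n) (T (x n)) ≤ 2 * b) :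
    ∀ m n : ℕ, dist (x (n+m)) (T (x (n+m))) ≤ dist (x n) (T (x n)) +
      4 * b * ((∑ i ∈ Finset.range (n+m), s i * (1 - lam i)) - ∑ i ∈ Finset.range n, s i * (1 - lam i)) :=
  stmt_13_general W W1 C hC T hTC hTnon lam s hlam hs x0 hx0C x hx0 hrec b hbnd
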